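/- arXiv:0710.1522 — 2 statements merged into one kernel-verified Lean document; each statement's English description precedes it below -/
import Mathlib

section
/- Let f₀(x) = √(2/π)·e^{-x²/2} for x ≥ 0 (and 0 for x < 0), let ε₀ ∈ (0,1), and let x₀ > 0 satisfy ∫₀^{x₀} f₀(x)/ε₀ dx = 1. Then for every probability density f supported on [0,∞) with f(x) ≤ f₀(x)/ε₀ for all x, we have ∫₀^∞ x f(x) dx ≥ ∫₀^{x₀} x f₀(x)/ε₀ dx. -/
/-!
Bathtub principle. Let `g` be `f₀ / ε₀` truncated to `(0, x₀]`. Then `f ≤ g` on `(0, x₀]` and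
`g = 0 ≤ f` beyond `x₀`, so `(x - x₀) (f x - g x) ≥ 0` for almost every `x`. Integrating this and
using that `f` and `g` both have mass one gives `∫ x f ≥ ∫ x g`.
-/

open MeasureTheory

/-- The half-normal density. -/
noncomputable def halfNormalDensity (x : ℝ) : ℝ :=
  if 0 ≤ x then Real.sqrt (2 / Real.pi) * Real.exp (-x ^ 2 / 2) else 0

open Set

theorem integral_mul_le_integral_mul_of_sub_mul_sub_nonneg {α : Type*} [MeasurableSpace α]
    {μ : Measure α} {φ f g : α → ℝ} (c : ℝ) (hf : Integrable f μ) (hg : Integrable g μ)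
    (hφf : Integrable (fun x => φ x * f x) μ) (hφg : Integrable (fun x => φ x * g x) μ)
    (hmass : ∫ x, f x ∂μ = ∫ x, g x ∂μ) (hsign : ∀ᵐ x ∂μ, 0 ≤ (φ x - c) * (f x - g x)) :
    ∫ x, φ x * g x ∂μ ≤ ∫ x, φ x * f x ∂μ := by
  have hexpand : ∫ x, (φ x - c) * (f x - g x) ∂μ
      = (∫ x, φ x * f x ∂μ) - (∫ x, φ x * g x ∂μ) - c * ((∫ x, f x ∂μ) - ∫ x, g x ∂μ) := by
    have hpointwise : (fun x => (φ x - c) * (f x - g x))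
        = fun x => (φ x * f x - φ x * g x) - c * (f x - g x) := by
      funext x; ring
    have hφfg : Integrable (fun x => φ x * f x - φ x * g x) μ := hφf.sub hφg
    have hcfg : Integrable (fun x => c * (f x - g x)) μ := (hf.sub hg).const_mul c
    rw [hpointwise, integral_sub hφfg hcfg, integral_sub hφf hφg, integral_const_mul,
      integral_sub hf hg]
  have hnonneg := integral_nonneg_of_ae hsign
  rwa [hexpand, hmass, sub_self, mul_zero, sub_zero, sub_nonneg] at hnonneg

theorem sub_mul_sub_indicator_Ioc_nonneg {f h : ℝ → ℝ} {x₀ x : ℝ} (hx : x ≠ 0)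
    (hf0 : 0 ≤ f x) (hfneg : x < 0 → f x = 0) (hfh : f x ≤ h x) :
    0 ≤ (x - x₀) * (f x - (Ioc 0 x₀).indicator h x) := by
  by_cases hxI : x ∈ Ioc 0 x₀
  · rw [indicator_of_mem hxI]
    exact mul_nonneg_of_nonpos_of_nonpos (by linarith [hxI.2]) (by linarith)
  · rw [indicator_of_notMem hxI, sub_zero]
    rcases hx.lt_or_gt with hneg | hpos
    · simp [hfneg hneg]
    · exact mul_nonneg (by linarith [not_and.mp hxI hpos]) hf0

theorem integrable_mul_of_nonneg_of_le {α : Type*} [MeasurableSpace α] {μ : Measure α}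
    {φ f h : α → ℝ} (hφh : Integrable (fun x => φ x * h x) μ) (hφ : AEStronglyMeasurable φ μ)
    (hf : AEStronglyMeasurable f μ) (hf0 : ∀ x, 0 ≤ f x) (hfh : ∀ x, f x ≤ h x) :
    Integrable (fun x => φ x * f x) μ := by
  refine hφh.mono (hφ.mul hf) (ae_of_all _ fun x => ?_)
  rw [norm_mul, norm_mul, Real.norm_of_nonneg (hf0 x)]
  exact mul_le_mul_of_nonneg_left ((hfh x).trans (le_abs_self _)) (norm_nonneg _)

namespace halfNormalDensity

theorem nonneg (x : ℝ) : 0 ≤ halfNormalDensity x := by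
  unfold halfNormalDensity
  split_ifs <;> positivity

theorem measurable : Measurable halfNormalDensity :=
  Measurable.ite measurableSet_Ici (by fun_prop) measurable_const

theorem le_gaussian (x : ℝ) :
    halfNormalDensity x ≤ Real.sqrt (2 / Real.pi) * Real.exp (-(1 / 2) * x ^ 2) := by
  unfold halfNormalDensity
  split_ifs
  · exact le_of_eq (by ring_nf)
  · positivity

theorem integrable : Integrable halfNormalDensity :=
  integrable_of_le_of_le measurable.aestronglyMeasurable (ae_of_all _ nonneg)
    (ae_of_all _ le_gaussian) (integrable_zero _ _ _)
    ((integrable_exp_neg_mul_sq (by norm_num)).const_mul _)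

theorem integrable_mul : Integrable fun x => x * halfNormalDensity x := by
  simpa only [mul_comm] using integrable_mul_of_nonneg_of_le (φ := fun x => x)
    (((integrable_mul_exp_neg_mul_sq (b := 1 / 2) (by norm_num)).const_mul
      (Real.sqrt (2 / Real.pi))).congr (ae_of_all _ fun x => by ring))
    measurable_id.aestronglyMeasurable measurable.aestronglyMeasurable nonneg le_gaussian

end halfNormalDensity

theorem stmt_6_general (ε₀ : ℝ) (x₀ : ℝ)
    (hx₀int : ∫ x in Set.Ioc (0 : ℝ) x₀, halfNormalDensity x / ε₀ = 1)
    (f : ℝ → ℝ) (hf : Measurable f) (hf0 : ∀ x, 0 ≤ f x)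
    (hfneg : ∀ x < (0 : ℝ), f x = 0)
    (hfle : ∀ x, f x ≤ halfNormalDensity x / ε₀)
    (hfint : ∫ x, f x = 1) :
    ∫ x in Set.Ioi (0 : ℝ), x * f x ≥
      ∫ x in Set.Ioc (0 : ℝ) x₀, x * (halfNormalDensity x / ε₀) := by
  set g := (Ioc 0 x₀).indicator fun x => halfNormalDensity x / ε₀
  have hh : Integrable fun x => halfNormalDensity x / ε₀ :=
    halfNormalDensity.integrable.div_const ε₀
  have hxh : Integrable fun x => x * (halfNormalDensity x / ε₀) := by
    simpa only [mul_div_assoc] using halfNormalDensity.integrable_mul.div_const ε₀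
  have hxg : (fun x => x * g x) = (Ioc 0 x₀).indicator fun x => x * (halfNormalDensity x / ε₀) :=
    funext fun x => (indicator_mul_right _ (fun x => x) _).symm
  have hmean_f : ∫ x in Ioi 0, x * f x = ∫ x, x * f x :=
    setIntegral_eq_integral_of_forall_compl_eq_zero fun x hx => by
      rcases (not_lt.mp (mem_Ioi.not.mp hx)).lt_or_eq with hneg | rfl
      · rw [hfneg x hneg, mul_zero]
      · rw [zero_mul]
  have hmean_g : ∫ x in Ioc 0 x₀, x * (halfNormalDensity x / ε₀) = ∫ x, x * g x := by
    rw [hxg, integral_indicator measurableSet_Ioc]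
  rw [ge_iff_le, hmean_f, hmean_g]
  refine integral_mul_le_integral_mul_of_sub_mul_sub_nonneg x₀
    (integrable_of_le_of_le hf.aestronglyMeasurable (ae_of_all _ hf0) (ae_of_all _ hfle)
      (integrable_zero _ _ _) hh)
    (hh.integrableOn.integrable_indicator measurableSet_Ioc)
    (integrable_mul_of_nonneg_of_le hxh measurable_id.aestronglyMeasurable
      hf.aestronglyMeasurable hf0 hfle)
    (hxg ▸ hxh.integrableOn.integrable_indicator measurableSet_Ioc)
    (by rw [hfint, integral_indicator measurableSet_Ioc, hx₀int]) ?_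
  filter_upwards [volume.ae_ne 0] with x hx
  exact sub_mul_sub_indicator_Ioc_nonneg hx (hf0 x) (hfneg x) (hfle x)

theorem stmt_6 (ε₀ : ℝ) (hε₀ : ε₀ ∈ Set.Ioo (0 : ℝ) 1) (x₀ : ℝ) (hx₀ : 0 < x₀)
    (hx₀int : ∫ x in Set.Ioc (0 : ℝ) x₀, halfNormalDensity x / ε₀ = 1)
    (f : ℝ → ℝ) (hf : Measurable f) (hf0 : ∀ x, 0 ≤ f x)
    (hfneg : ∀ x < (0 : ℝ), f x = 0)
    (hfle : ∀ x, f x ≤ halfNormalDensity x / ε₀)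
    (hfint : ∫ x, f x = 1) :
    ∫ x in Set.Ioi (0 : ℝ), x * f x ≥
      ∫ x in Set.Ioc (0 : ℝ) x₀, x * (halfNormalDensity x / ε₀) :=
  stmt_6_general ε₀ x₀ hx₀int f hf hf0 hfneg hfle hfint
end

section
/- For i.i.d. half-normal random variables |h₁|,…,|h_S| (with hᵢ ~ N(0,1)) and any k > 0, P(Σᵢ |hᵢ| < k) ≤ ((ek/S)·√(2/π))^S. -/
/-!
Chernoff's method for the lower tail: for `t ≥ 0`, Markov's inequality applied to
`exp (-t ∑ |hᵢ|)` and independence give `P(∑ |hᵢ| ≤ k) ≤ e^{tk} (E e^{-t|h|})^S`. Bounding the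
Gaussian density by its maximum `1/√(2π)` yields `E e^{-t|h|} ≤ ∫ e^{-t|x|} dx / √(2π) = √(2/π)/t`,
and the choice `t = S/k` turns `e^{tk}` into `e^S`.
-/

open MeasureTheory ProbabilityTheory Real Set
open scoped NNReal

lemma integral_exp_neg_mul_abs {t : ℝ} (ht : 0 < t) : ∫ x : ℝ, exp (-t * |x|) = 2 / t := by
  rw [integral_comp_abs (f := fun y => exp (-t * y))]
  simp_rw [neg_mul]
  rw [integral_comp_mul_left_Ioi (fun y => exp (-y)) 0 ht, mul_zero, integral_exp_neg_Ioi_zero,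
    smul_eq_mul, mul_one]
  ring

lemma integrable_exp_neg_mul_abs {t : ℝ} (ht : 0 < t) : Integrable fun x : ℝ => exp (-t * |x|) :=
  .of_integral_ne_zero (by rw [integral_exp_neg_mul_abs ht]; positivity)

lemma gaussianPDFReal_le (m : ℝ) (v : ℝ≥0) (x : ℝ) : gaussianPDFReal m v x ≤ (√(2 * π * v))⁻¹ := by
  rw [gaussianPDFReal]
  refine mul_le_of_le_one_right (by positivity) (exp_le_one_iff.mpr ?_)
  exact div_nonpos_of_nonpos_of_nonneg (neg_nonpos.mpr (sq_nonneg _)) (by positivity)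

lemma integral_exp_neg_mul_abs_gaussianReal_le (m : ℝ) {v : ℝ≥0} (hv : v ≠ 0) {t : ℝ}
    (ht : 0 < t) : ∫ x, exp (-t * |x|) ∂gaussianReal m v ≤ (√(2 * π * v))⁻¹ * (2 / t) := by
  rw [integral_gaussianReal_eq_integral_smul hv, ← integral_exp_neg_mul_abs ht,
    ← integral_const_mul]
  refine integral_mono_of_nonneg (ae_of_all _ fun x => ?_)
    ((integrable_exp_neg_mul_abs ht).const_mul _) (ae_of_all _ fun x => ?_)
  · exact smul_nonneg (gaussianPDFReal_nonneg m v x) (exp_nonneg _)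
  · exact mul_le_mul_of_nonneg_right (gaussianPDFReal_le m v x) (exp_nonneg _)

theorem ProbabilityTheory.iIndepFun.measureReal_sum_le_le_exp_mul_pow {ι Ω : Type*} [Fintype ι]
    {mΩ : MeasurableSpace Ω} {μ : Measure Ω} [IsFiniteMeasure μ] {X : ι → Ω → ℝ}
    (hindep : iIndepFun X μ) (hmeas : ∀ i, AEMeasurable (X i) μ) (hnonneg : ∀ i ω, 0 ≤ X i ω)
    {t B : ℝ} (ht : 0 ≤ t) (hB : ∀ i, mgf (X i) μ (-t) ≤ B) (k : ℝ) :
    μ.real {ω | ∑ i, X i ω ≤ k} ≤ exp (t * k) * B ^ Fintype.card ι := by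
  have hint : Integrable (fun ω => exp (-t * (∑ i, X i) ω)) μ := by
    refine (integrable_const 1).mono' (by fun_prop) (ae_of_all _ fun ω => ?_)
    rw [norm_of_nonneg (exp_nonneg _), exp_le_one_iff, Finset.sum_apply]
    exact mul_nonpos_of_nonpos_of_nonneg (neg_nonpos.mpr ht)
      (Finset.sum_nonneg fun i _ => hnonneg i ω)
  calc μ.real {ω | ∑ i, X i ω ≤ k} = μ.real {ω | (∑ i, X i) ω ≤ k} := by
        simp only [Finset.sum_apply]
    _ ≤ exp (-(-t) * k) * mgf (∑ i, X i) μ (-t) :=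
        measure_le_le_exp_mul_mgf k (neg_nonpos.mpr ht) hint
    _ = exp (t * k) * ∏ i, mgf (X i) μ (-t) := by rw [neg_neg, hindep.mgf_sum₀ hmeas]
    _ ≤ exp (t * k) * B ^ Fintype.card ι := by
        rw [← Finset.card_univ, ← Finset.prod_const]
        exact mul_le_mul_of_nonneg_left
          (Finset.prod_le_prod (fun _ _ => mgf_nonneg) fun i _ => hB i) (exp_nonneg _)

lemma sqrt_two_div_pi : √(2 / π) = (√(2 * π))⁻¹ * 2 := by
  have hπ : 0 < π := pi_pos
  rw [eq_inv_mul_iff_mul_eq₀ (by positivity), ← sqrt_mul (by positivity),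
    show 2 * π * (2 / π) = 2 ^ 2 by field_simp, sqrt_sq zero_le_two]

theorem stmt_11_general {Ω : Type*} [MeasureSpace Ω] (μ : Measure Ω) [IsProbabilityMeasure μ]
    (S : ℕ) (h : Fin S → Ω → ℝ)
    (hgauss : ∀ i, μ.map (h i) = gaussianReal 0 1)
    (hindep : iIndepFun h μ)
    (k : ℝ) (hk : 0 < k) :
    μ {ω | ∑ i, |h i ω| < k} ≤
      ENNReal.ofReal ((Real.exp 1 * k / S * Real.sqrt (2 / Real.pi)) ^ S) := by
  have hmeas (i : Fin S) : AEMeasurable (h i) μ :=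
    .of_map_ne_zero (by rw [hgauss i]; exact IsProbabilityMeasure.ne_zero _)
  set t : ℝ := S / k
  have hmgf (i : Fin S) : mgf (fun ω => |h i ω|) μ (-t) ≤ √(2 / π) / t := by
    have ht : 0 < t := div_pos (by exact_mod_cast i.pos) hk
    rw [mgf, ← integral_map (f := fun x => exp (-t * |x|)) (hmeas i) (by fun_prop), hgauss i,
      sqrt_two_div_pi, mul_div_assoc]
    simpa using integral_exp_neg_mul_abs_gaussianReal_le 0 one_ne_zero ht
  have hchernoff := (hindep.comp (fun _ x => |x|) fun _ => measurable_abs)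
    |>.measureReal_sum_le_le_exp_mul_pow (fun i => (hmeas i).abs) (fun i ω => abs_nonneg _)
      (by positivity) hmgf k
  have hbound : exp (t * k) * (√(2 / π) / t) ^ Fintype.card (Fin S)
      = (exp 1 * k / S * √(2 / π)) ^ S := by
    rw [Fintype.card_fin, div_mul_cancel₀ _ hk.ne', ← exp_one_pow, ← mul_pow,
      div_eq_mul_inv _ t, inv_div]
    ring
  calc μ {ω | ∑ i, |h i ω| < k} ≤ μ {ω | ∑ i, |h i ω| ≤ k} :=
        measure_mono <| ofPred_subset_ofPred.mpr fun _ => le_of_lt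
    _ = ENNReal.ofReal (μ.real {ω | ∑ i, |h i ω| ≤ k}) :=
        (ofReal_measureReal (measure_ne_top _ _)).symm
    _ ≤ _ := ENNReal.ofReal_le_ofReal (hchernoff.trans_eq hbound)

theorem stmt_11 {Ω : Type*} [MeasureSpace Ω] (μ : Measure Ω) [IsProbabilityMeasure μ]
    (S : ℕ) (hS : 1 ≤ S) (h : Fin S → Ω → ℝ) (hmeas : ∀ i, Measurable (h i))
    (hgauss : ∀ i, μ.map (h i) = gaussianReal 0 1)
    (hindep : iIndepFun h μ)
    (k : ℝ) (hk : 0 < k) :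
    μ {ω | ∑ i, |h i ω| < k} ≤
      ENNReal.ofReal ((Real.exp 1 * k / S * Real.sqrt (2 / Real.pi)) ^ S) :=
  stmt_11_general μ S h hgauss hindep k hk
end
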